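/- (Proposition 3.2, functional form.) Let n be an integer with 16 ≤ n ≤ 23 and K a real number with 0 ≤ K ≤ 760. Define Θ(y) = θ₃(y)^n − 2n · θ₃(y)^{n−8} · Δ₈(y) + (2n(n − 23) + K) · θ₃(y)^{n−16} · Δ₈(y)² for y > 0. Then Θ(y) > 0 for all y > 0, and θ₃(y)^n / Θ(y) ≤ 1 / (1 − 2n/2⁶ + (2n(n − 23) + K)/2¹²) for all y > 0, with equality at y = 1. In particular, every non-extremal unimodular lattice of dimension n, 16 ≤ n ≤ 23, containing no vector of norm 1 and having kissing number K has secrecy gain χ = 1/(1 − 2n/2⁶ + (2n(n−23)+K)/2¹²), achieved at τ = i. -/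

import Mathlib

open Real

/-- θ₂ on the imaginary axis: θ₂(y) = ∑_{n ∈ ℤ} e^{-π y (n + 1/2)²}. -/
noncomputable def theta2 (y : ℝ) : ℝ := ∑' n : ℤ, Real.exp (-π * y * ((n : ℝ) + 1/2)^2)

/-- θ₃ on the imaginary axis: θ₃(y) = ∑_{n ∈ ℤ} e^{-π y n²}. -/
noncomputable def theta3 (y : ℝ) : ℝ := ∑' n : ℤ, Real.exp (-π * y * (n : ℝ)^2)

/-- θ₄ on the imaginary axis: θ₄(y) = ∑_{n ∈ ℤ} (-1)^n e^{-π y n²}. -/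
noncomputable def theta4 (y : ℝ) : ℝ := ∑' n : ℤ, (-1 : ℝ) ^ n * Real.exp (-π * y * (n : ℝ)^2)

/-- Δ₈ on the imaginary axis: Δ₈(y) = (1/16) θ₂(y)⁴ θ₄(y)⁴. -/
noncomputable def Delta8 (y : ℝ) : ℝ := (1/16 : ℝ) * theta2 y ^ 4 * theta4 y ^ 4

/-!
Put `t = Δ₈/θ₃⁸`. Then `Θ = θ₃ⁿ · (1 - 2n t + (2n(n - 23) + K) t²)`, and for `16 ≤ n ≤ 23`,
`0 ≤ K ≤ 760` this quadratic is decreasing on `[0, 1/64]` and positive at `1/64`. The range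
`0 ≤ t ≤ 1/64` is AM-GM, `4 θ₂⁴ θ₄⁴ ≤ (θ₂⁴ + θ₄⁴)²`, combined with Jacobi's identity
`θ₂⁴ + θ₄⁴ = θ₃⁴`, which follows from the duplication formulas for `θ₂², θ₃², θ₄²`. At `y = 1`,
the theta transformation formula gives `θ₂(1) = θ₄(1)`, so `t = 1/64` there.
-/

open HurwitzZeta

noncomputable def evenOddPairEquiv : (ℤ × ℤ) ⊕ (ℤ × ℤ) ≃ ℤ × ℤ :=
  Equiv.ofBijective
    (Sum.elim (fun q => (q.1 + q.2, q.1 - q.2)) (fun q => (q.1 + q.2 + 1, q.1 - q.2))) <| by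
    constructor
    · rintro (⟨a, b⟩ | ⟨a, b⟩) (⟨c, d⟩ | ⟨c, d⟩) h <;>
        simp only [Sum.elim_inl, Sum.elim_inr, Prod.mk.injEq] at h <;>
        first | omega | (congr 2 <;> omega)
    · rintro ⟨m, n⟩
      rcases Int.even_or_odd (m + n) with ⟨k, hk⟩ | ⟨k, hk⟩
      · exact ⟨.inl (k, m - k), by simp only [Sum.elim_inl, Prod.mk.injEq]; omega⟩
      · exact ⟨.inr (k, m - k - 1), by simp only [Sum.elim_inr, Prod.mk.injEq]; omega⟩

lemma tsum_mul_tsum_int_eq_add {R : Type*} [NormedRing R] [CompleteSpace R] {f g : ℤ → R}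
    (hf : Summable fun n => ‖f n‖) (hg : Summable fun n => ‖g n‖) :
    (∑' m, f m) * (∑' n, g n) =
      ∑' q : ℤ × ℤ, f (q.1 + q.2) * g (q.1 - q.2)
        + ∑' q : ℤ × ℤ, f (q.1 + q.2 + 1) * g (q.1 - q.2) := by
  have hfg := evenOddPairEquiv.summable_iff.mpr (summable_mul_of_summable_norm hf hg)
  rw [tsum_mul_tsum_of_summable_norm hf hg, ← evenOddPairEquiv.tsum_eq]
  exact Summable.tsum_sum (hfg.comp_injective Sum.inl_injective)
    (hfg.comp_injective Sum.inr_injective)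

lemma summable_gaussian (a : ℝ) {t : ℝ} (ht : 0 < t) :
    Summable fun n : ℤ => rexp (-π * t * (n + a) ^ 2) :=
  (hasSum_int_evenKernel a ht).summable.congr fun n => by ring_nf

lemma summable_norm_zpow_mul_gaussian {s : ℝ} (hs : |s| = 1) (a : ℝ) {t : ℝ} (ht : 0 < t) :
    Summable fun n : ℤ => ‖s ^ n * rexp (-π * t * (n + a) ^ 2)‖ := by
  simp only [norm_mul, norm_zpow, Real.norm_eq_abs, hs, one_zpow, one_mul, abs_exp]
  exact summable_gaussian a ht

lemma tsum_gaussian_mul_tsum_gaussian {s : ℝ} (hs : |s| = 1) (d e : ℝ) {y : ℝ} (hy : 0 < y) :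
    (∑' m : ℤ, s ^ m * rexp (-π * y * (m + d) ^ 2))
        * (∑' n : ℤ, s ^ n * rexp (-π * y * (n + e) ^ 2)) =
      evenKernel ↑((d + e) / 2) (2 * y) * evenKernel ↑((d - e) / 2) (2 * y)
        + s * (evenKernel ↑((d + e + 1) / 2) (2 * y) * evenKernel ↑((d - e + 1) / 2) (2 * y)) := by
  have h2y : 0 < 2 * y := by positivity
  have hprod (a b : ℝ) : evenKernel a (2 * y) * evenKernel b (2 * y) =
      ∑' q : ℤ × ℤ, rexp (-π * (q.1 + a) ^ 2 * (2 * y)) * rexp (-π * (q.2 + b) ^ 2 * (2 * y)) := by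
    rw [← (hasSum_int_evenKernel a h2y).tsum_eq, ← (hasSum_int_evenKernel b h2y).tsum_eq]
    exact tsum_mul_tsum_of_summable_norm (hasSum_int_evenKernel a h2y).summable.norm
      (hasSum_int_evenKernel b h2y).summable.norm
  rw [tsum_mul_tsum_int_eq_add (f := fun m : ℤ => s ^ m * rexp (-π * y * (m + d) ^ 2))
    (g := fun m : ℤ => s ^ m * rexp (-π * y * (m + e) ^ 2))
    (summable_norm_zpow_mul_gaussian hs d hy) (summable_norm_zpow_mul_gaussian hs e hy),
    hprod, hprod, ← tsum_mul_left]
  have hs0 : s ≠ 0 := by rintro rfl; simp at hs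
  have hsign (k : ℤ) : s ^ (2 * k) = 1 := by
    rw [zpow_mul, zpow_two, ← sq, ← sq_abs, hs, one_pow, one_zpow]
  -- `(a + b + d)² + (a - b + e)² = 2 (a + (d + e)/2)² + 2 (b + (d - e)/2)²`, and likewise
  -- with `d + 1` in place of `d` on the odd coset.
  congr 1 <;> refine tsum_congr fun q => ?_
  · rw [mul_mul_mul_comm, ← zpow_add₀ hs0, ← Real.exp_add, ← Real.exp_add,
      show q.1 + q.2 + (q.1 - q.2) = 2 * q.1 by ring, hsign, one_mul]
    congr 1
    push_cast
    ring
  · rw [mul_mul_mul_comm, ← zpow_add₀ hs0, ← Real.exp_add, ← Real.exp_add,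
      show q.1 + q.2 + 1 + (q.1 - q.2) = 2 * q.1 + 1 by ring, zpow_add_one₀ hs0, hsign, one_mul]
    congr 2
    push_cast
    ring

lemma theta3_eq_evenKernel {y : ℝ} (hy : 0 < y) : theta3 y = evenKernel 0 y := by
  refine Eq.trans (tsum_congr fun n => ?_) (hasSum_int_evenKernel 0 hy).tsum_eq
  ring_nf

lemma theta2_eq_evenKernel {y : ℝ} (hy : 0 < y) : theta2 y = evenKernel (1 / 2 : ℝ) y := by
  refine Eq.trans (tsum_congr fun n => ?_) (hasSum_int_evenKernel (1 / 2) hy).tsum_eq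
  ring_nf

lemma theta4_eq_cosKernel {y : ℝ} (hy : 0 < y) : theta4 y = cosKernel (1 / 2 : ℝ) y := by
  rw [← Complex.ofReal_inj, ← (hasSum_int_cosKernel (1 / 2) hy).tsum_eq, theta4,
    Complex.ofReal_tsum]
  refine tsum_congr fun n => ?_
  rw [show 2 * π * Complex.I * ((1 / 2 : ℝ) : ℂ) * n = n * (π * Complex.I) by push_cast; ring,
    Complex.exp_int_mul, Complex.exp_pi_mul_I]
  push_cast
  ring_nf

theorem theta2_one_eq_theta4_one : theta2 1 = theta4 1 := by
  rw [theta2_eq_evenKernel one_pos, theta4_eq_cosKernel one_pos, evenKernel_functional_equation]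
  norm_num

lemma theta3_pos {y : ℝ} (hy : 0 < y) : 0 < theta3 y :=
  ((summable_gaussian 0 hy).congr fun n => by rw [add_zero]).tsum_pos
    (fun _ => (Real.exp_pos _).le) 0 (Real.exp_pos _)

lemma theta3_sq {y : ℝ} (hy : 0 < y) :
    theta3 y ^ 2 = theta3 (2 * y) ^ 2 + theta2 (2 * y) ^ 2 := by
  have h := tsum_gaussian_mul_tsum_gaussian (s := 1) (by simp) 0 0 hy
  simp only [one_zpow, one_mul, add_zero] at h
  rw [← theta3] at h
  norm_num [← theta3_eq_evenKernel, ← theta2_eq_evenKernel, hy] at h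
  linear_combination h

lemma theta2_sq {y : ℝ} (hy : 0 < y) : theta2 y ^ 2 = 2 * theta2 (2 * y) * theta3 (2 * y) := by
  have h := tsum_gaussian_mul_tsum_gaussian (s := 1) (by simp) (1 / 2) (1 / 2) hy
  simp only [one_zpow, one_mul] at h
  rw [← theta2] at h
  norm_num [AddCircle.coe_period, ← theta3_eq_evenKernel, ← theta2_eq_evenKernel, hy] at h
  linear_combination h

lemma theta4_sq {y : ℝ} (hy : 0 < y) :
    theta4 y ^ 2 = theta3 (2 * y) ^ 2 - theta2 (2 * y) ^ 2 := by
  have h := tsum_gaussian_mul_tsum_gaussian (s := -1) (by simp) 0 0 hy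
  simp only [add_zero] at h
  rw [← theta4] at h
  norm_num [← theta3_eq_evenKernel, ← theta2_eq_evenKernel, hy] at h
  linear_combination h

theorem theta2_pow_four_add_theta4_pow_four {y : ℝ} (hy : 0 < y) :
    theta2 y ^ 4 + theta4 y ^ 4 = theta3 y ^ 4 := by
  linear_combination (theta2 y ^ 2 + 2 * theta2 (2 * y) * theta3 (2 * y)) * theta2_sq hy
    + (theta4 y ^ 2 + theta3 (2 * y) ^ 2 - theta2 (2 * y) ^ 2) * theta4_sq hy
    - (theta3 y ^ 2 + theta3 (2 * y) ^ 2 + theta2 (2 * y) ^ 2) * theta3_sq hy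

lemma Delta8_div_theta3_pow_mem_Icc {y : ℝ} (hy : 0 < y) :
    Delta8 y / theta3 y ^ 8 ∈ Set.Icc 0 (1 / 64) := by
  have hjac := theta2_pow_four_add_theta4_pow_four hy
  refine ⟨by unfold Delta8; positivity, ?_⟩
  rw [div_le_iff₀ (pow_pos (theta3_pos hy) 8), Delta8,
    show theta3 y ^ 8 = (theta3 y ^ 4) ^ 2 by ring, ← hjac]
  nlinarith [sq_nonneg (theta2 y ^ 4 - theta4 y ^ 4)]

lemma Delta8_div_theta3_pow_one : Delta8 1 / theta3 1 ^ 8 = 1 / 64 := by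
  have hjac := theta2_pow_four_add_theta4_pow_four one_pos
  rw [← theta2_one_eq_theta4_one] at hjac
  rw [div_eq_iff (pow_pos (theta3_pos one_pos) 8).ne', Delta8, ← theta2_one_eq_theta4_one]
  linear_combination (theta3 1 ^ 4 + 2 * theta2 1 ^ 4) / 64 * hjac

lemma pow_sub_mul_add_eq_pow_mul {q : ℝ} (hq : q ≠ 0) {n : ℕ} (hn : 16 ≤ n) (a c D : ℝ) :
    q ^ n - a * q ^ (n - 8) * D + c * q ^ (n - 16) * D ^ 2
      = q ^ n * (1 - a * (D / q ^ 8) + c * (D / q ^ 8) ^ 2) := by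
  obtain ⟨m, rfl⟩ := Nat.exists_eq_add_of_le' hn
  rw [show m + 16 - 8 = m + 8 by omega, Nat.add_sub_cancel]
  field_simp
  ring

lemma antitoneOn_quadratic {a c r : ℝ} (ha : 0 ≤ a) (hc : 2 * r * c ≤ a) :
    AntitoneOn (fun t => 1 - a * t + c * t ^ 2) (Set.Icc 0 r) := by
  rintro s ⟨hs0, hsr⟩ t ⟨ht0, htr⟩ hst
  have hslope : c * (s + t) ≤ a := by
    rcases le_total 0 c with hc0 | hc0 <;> nlinarith
  nlinarith [mul_nonneg (sub_nonneg.mpr hst) (sub_nonneg.mpr hslope)]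

lemma secrecy_denominator_pos (N K : ℝ) (hK : 0 ≤ K) :
    0 < 1 - 2 * N / 2 ^ 6 + (2 * N * (N - 23) + K) / 2 ^ 12 := by
  nlinarith [sq_nonneg (N - 87 / 2)]

/-- Proposition 3.2 (functional form): for 16 ≤ n ≤ 23, 0 ≤ K ≤ 760 and
Θ(y) = θ₃(y)^n − 2n θ₃(y)^{n−8} Δ₈(y) + (2n(n − 23) + K) θ₃(y)^{n−16} Δ₈(y)²,
one has Θ(y) > 0 for all y > 0 and
θ₃(y)^n / Θ(y) ≤ 1/(1 − 2n/2⁶ + (2n(n − 23) + K)/2¹²) for all y > 0, with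
equality at y = 1; in particular every non-extremal unimodular lattice of
dimension n with no vectors of norm 1 and kissing number K has secrecy gain
1/(1 − 2n/2⁶ + (2n(n−23)+K)/2¹²), achieved at τ = i. -/
theorem secrecy_gain_nonextremal (n : ℕ) (hn16 : 16 ≤ n) (hn23 : n ≤ 23)
    (K : ℝ) (hK0 : 0 ≤ K) (hK : K ≤ 760) (Θ : ℝ → ℝ)
    (hΘ : ∀ y : ℝ, 0 < y →
      Θ y = theta3 y ^ n - 2 * (n : ℝ) * theta3 y ^ (n - 8) * Delta8 y
        + (2 * (n : ℝ) * ((n : ℝ) - 23) + K) * theta3 y ^ (n - 16) * Delta8 y ^ 2) :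
    (∀ y : ℝ, 0 < y → 0 < Θ y) ∧
    (∀ y : ℝ, 0 < y → theta3 y ^ n / Θ y
      ≤ 1 / (1 - 2 * (n : ℝ) / 2 ^ 6 + (2 * (n : ℝ) * ((n : ℝ) - 23) + K) / 2 ^ 12)) ∧
    theta3 1 ^ n / Θ 1
      = 1 / (1 - 2 * (n : ℝ) / 2 ^ 6 + (2 * (n : ℝ) * ((n : ℝ) - 23) + K) / 2 ^ 12) := by
  have hN16 : (16 : ℝ) ≤ n := by exact_mod_cast hn16
  have hN23 : (n : ℝ) ≤ 23 := by exact_mod_cast hn23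
  set f : ℝ → ℝ := fun t => 1 - 2 * n * t + (2 * n * (n - 23) + K) * t ^ 2 with hf
  have hf_anti : AntitoneOn f (Set.Icc 0 (1 / 64)) :=
    antitoneOn_quadratic (by positivity) (by nlinarith)
  have hf_end : f (1 / 64) = 1 - 2 * (n : ℝ) / 2 ^ 6 + (2 * n * (n - 23) + K) / 2 ^ 12 := by
    simp only [hf]; ring
  have hf_pos : 0 < f (1 / 64) := hf_end ▸ secrecy_denominator_pos n K hK0
  have hf_ge (y : ℝ) (hy : 0 < y) : f (1 / 64) ≤ f (Delta8 y / theta3 y ^ 8) :=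
    hf_anti (Delta8_div_theta3_pow_mem_Icc hy) ⟨by norm_num, le_rfl⟩
      (Delta8_div_theta3_pow_mem_Icc hy).2
  have hΘf (y : ℝ) (hy : 0 < y) : Θ y = theta3 y ^ n * f (Delta8 y / theta3 y ^ 8) := by
    rw [hΘ y hy, pow_sub_mul_add_eq_pow_mul (theta3_pos hy).ne' hn16]
  have hratio (y : ℝ) (hy : 0 < y) : theta3 y ^ n / Θ y = 1 / f (Delta8 y / theta3 y ^ 8) := by
    rw [hΘf y hy, div_mul_cancel_left₀ (pow_pos (theta3_pos hy) n).ne', one_div]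
  refine ⟨fun y hy => ?_, fun y hy => ?_, ?_⟩
  · rw [hΘf y hy]
    exact mul_pos (pow_pos (theta3_pos hy) n) (hf_pos.trans_le (hf_ge y hy))
  · rw [hratio y hy, ← hf_end]
    exact one_div_le_one_div_of_le hf_pos (hf_ge y hy)
  · rw [hratio 1 one_pos, Delta8_div_theta3_pow_one, hf_end]
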